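/- arXiv:1607.05467 — 3 statements merged into one kernel-verified Lean document; each statement's English description precedes it below -/
import Mathlib

section
/- Let γ > 2 and n ≥ 1. For every x ∈ ℝ² with ‖x‖ > √n, ∫_{B(0,√n)} (1 + ‖y−x‖₁)^{−γ} dy ≤ c_γ (1 + ‖x‖ − √n)^{2−γ}, where ‖·‖₁ is the ℓ¹ norm on ℝ² and c_γ depends only on γ. -/
/-!
Since the Euclidean norm is dominated by the ℓ¹ norm, the integrand is at most
`(1 + ‖y - x‖) ^ (-γ)`, and on the ball `‖y - x‖ > d := ‖x‖ - √n`. After translating by `x`, the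
integral is therefore bounded by that of `(1 + ‖z‖) ^ (-γ)` over `{‖z‖ > d}`, which in polar
coordinates is `2 |B(0,1)| ∫_d^∞ r (1 + r) ^ (-γ) dr ≤ 2 |B(0,1)| (1 + d) ^ (2 - γ) / (γ - 2)`.
The same argument works in any finite dimension `k < γ`.
-/

open MeasureTheory Set Filter Topology Metric

lemma integral_add_rpow_Ioi_of_lt {a c m : ℝ} (ha : a < -1) (hc : -m < c) :
    ∫ x in Ioi c, (x + m) ^ a = -(c + m) ^ (a + 1) / (a + 1) := by
  have hderiv : ∀ x ∈ Ici c, HasDerivAt (fun t ↦ (t + m) ^ (a + 1) / (a + 1)) ((x + m) ^ a) x := by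
    intro x hx
    convert! (((hasDerivAt_id x).add_const m).rpow_const
      (Or.inl (by simp only [id]; linarith [mem_Ici.mp hx]))).div_const (a + 1) using 1
    simp [show a + 1 ≠ 0 by linarith]
  have hlim : Tendsto (fun t ↦ (t + m) ^ (a + 1) / (a + 1)) atTop (𝓝 (0 / (a + 1))) := by
    rw [← neg_neg (a + 1)]
    exact ((tendsto_rpow_neg_atTop (by linarith)).comp
      (tendsto_atTop_add_const_right _ m tendsto_id)).div_const _
  rw [integral_Ioi_of_hasDerivAt_of_tendsto' hderiv (integrableOn_add_rpow_Ioi_of_lt ha hc) hlim]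
  ring

lemma pow_mul_one_add_rpow_neg_le {r : ℝ} (hr : 0 ≤ r) (n : ℕ) (γ : ℝ) :
    r ^ n * (1 + r) ^ (-γ) ≤ (r + 1) ^ ((n : ℝ) - γ) := by
  rw [sub_eq_add_neg, Real.rpow_add (by positivity), Real.rpow_natCast, add_comm r]
  gcongr
  linarith

section Radial

variable {n : ℕ} {γ d : ℝ}

lemma integrableOn_Ioi_pow_mul_one_add_rpow_neg (hγ : n + 1 < γ) (hd : 0 ≤ d) :
    IntegrableOn (fun r : ℝ ↦ r ^ n * (1 + r) ^ (-γ)) (Ioi d) := by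
  refine (integrableOn_add_rpow_Ioi_of_lt (a := (n : ℝ) - γ) (m := 1) (by linarith)
    (by linarith)).mono' ?_ ?_
  · fun_prop
  · filter_upwards [ae_restrict_mem measurableSet_Ioi] with r hdr
    have hr : 0 ≤ r := hd.trans hdr.le
    rw [Real.norm_of_nonneg (by positivity)]
    exact pow_mul_one_add_rpow_neg_le hr n γ

lemma setIntegral_Ioi_pow_mul_one_add_rpow_neg_le (hγ : n + 1 < γ) (hd : 0 ≤ d) :
    ∫ r in Ioi d, r ^ n * (1 + r) ^ (-γ) ≤ (1 + d) ^ (n + 1 - γ) / (γ - (n + 1)) := by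
  calc ∫ r in Ioi d, r ^ n * (1 + r) ^ (-γ)
      ≤ ∫ r in Ioi d, (r + 1) ^ ((n : ℝ) - γ) :=
        setIntegral_mono_on (integrableOn_Ioi_pow_mul_one_add_rpow_neg hγ hd)
          (integrableOn_add_rpow_Ioi_of_lt (by linarith) (by linarith)) measurableSet_Ioi
          fun r hr ↦ pow_mul_one_add_rpow_neg_le (hd.trans hr.le) n γ
    _ = (1 + d) ^ (n + 1 - γ) / (γ - (n + 1)) := by
        rw [integral_add_rpow_Ioi_of_lt (by linarith) (by linarith), add_comm d,
          ← neg_div_neg_eq, neg_neg]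
        ring_nf

end Radial

lemma EuclideanSpace.norm_le_sum_abs {ι : Type*} [Fintype ι] (v : EuclideanSpace ℝ ι) :
    ‖v‖ ≤ ∑ i, |v i| := by
  rw [EuclideanSpace.norm_eq, Real.sqrt_le_left (by positivity)]
  simpa only [Real.norm_eq_abs] using
    Finset.sum_sq_le_sq_sum_of_nonneg fun i _ ↦ abs_nonneg (v i)

lemma pow_smul_indicator_Ioi_eq {d : ℝ} (k : ℕ) (f : ℝ → ℝ) :
    (fun r : ℝ ↦ r ^ k • (Ioi d).indicator f r) = (Ioi d).indicator (fun r ↦ r ^ k * f r) :=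
  funext fun r ↦ (indicator_smul_apply (Ioi d) (· ^ k) f r).symm

section HaarMeasure

variable {E : Type*} [NormedAddCommGroup E] [NormedSpace ℝ E] [FiniteDimensional ℝ E]
  [MeasurableSpace E] [BorelSpace E] [Nontrivial E] (μ : Measure E) [μ.IsAddHaarMeasure]
  {γ d : ℝ}

local notation "dim" => Module.finrank ℝ E

omit [MeasurableSpace E] [BorelSpace E] in
variable (E) in
lemma cast_finrank_sub_one_add_one : ((dim - 1 : ℕ) : ℝ) + 1 = dim := by
  exact_mod_cast Nat.sub_add_cancel Module.finrank_pos

lemma integrable_indicator_one_add_norm_rpow_neg (hγ : dim < γ) (hd : 0 ≤ d) :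
    Integrable (fun z : E ↦ (Ioi d).indicator (fun r ↦ (1 + r) ^ (-γ)) ‖z‖) μ := by
  rw [integrable_fun_norm_addHaar, pow_smul_indicator_Ioi_eq,
    integrableOn_indicator_iff measurableSet_Ioi, Ioi_inter_Ioi, max_eq_left hd]
  exact integrableOn_Ioi_pow_mul_one_add_rpow_neg (by rwa [cast_finrank_sub_one_add_one E]) hd

lemma integral_indicator_one_add_norm_rpow_neg_le (hγ : dim < γ) (hd : 0 ≤ d) :
    ∫ z, (Ioi d).indicator (fun r ↦ (1 + r) ^ (-γ)) ‖z‖ ∂μ ≤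
      dim * μ.real (ball 0 1) * ((1 + d) ^ (dim - γ) / (γ - dim)) := by
  rw [integral_fun_norm_addHaar, pow_smul_indicator_Ioi_eq, setIntegral_indicator measurableSet_Ioi,
    Ioi_inter_Ioi, max_eq_right hd, nsmul_eq_mul, smul_eq_mul, ← mul_assoc]
  have hrad := setIntegral_Ioi_pow_mul_one_add_rpow_neg_le (n := dim - 1) (γ := γ)
    (by rwa [cast_finrank_sub_one_add_one E]) hd
  rw [cast_finrank_sub_one_add_one E] at hrad
  gcongr

lemma setIntegral_ball_one_add_norm_sub_rpow_neg_le (x : E) {R : ℝ} (hγ : dim < γ)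
    (hR : R ≤ ‖x‖) :
    ∫ y in ball 0 R, (1 + ‖y - x‖) ^ (-γ) ∂μ ≤
      dim * μ.real (ball 0 1) * ((1 + (‖x‖ - R)) ^ (dim - γ) / (γ - dim)) := by
  set G : E → ℝ := fun z ↦ (Ioi (‖x‖ - R)).indicator (fun r ↦ (1 + r) ^ (-γ)) ‖z‖
  have hG : Integrable G μ := integrable_indicator_one_add_norm_rpow_neg μ hγ (sub_nonneg.2 hR)
  calc ∫ y in ball 0 R, (1 + ‖y - x‖) ^ (-γ) ∂μ
      = ∫ y in ball 0 R, G (y - x) ∂μ := by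
        refine setIntegral_congr_fun measurableSet_ball fun y hy ↦
          (indicator_of_mem (s := Ioi (‖x‖ - R)) ?_ (fun r ↦ (1 + r) ^ (-γ))).symm
        have := norm_sub_norm_le x y
        rw [mem_ball_zero_iff] at hy
        rw [mem_Ioi, norm_sub_rev]
        linarith
    _ ≤ ∫ y, G (y - x) ∂μ :=
        setIntegral_le_integral (hG.comp_sub_right x) (ae_of_all _ fun y ↦
          indicator_nonneg (fun r hr ↦ Real.rpow_nonneg (by linarith [mem_Ioi.1 hr]) _) _)
    _ = ∫ z, G z ∂μ := integral_sub_right_eq_self G x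
    _ ≤ _ := integral_indicator_one_add_norm_rpow_neg_le μ hγ (sub_nonneg.2 hR)

end HaarMeasure

/-- for γ > 2 there is c_γ > 0 such that for all n ≥ 1 and all x with
‖x‖ > √n (Euclidean norm), ∫_{B(0,√n)} (1+‖y−x‖₁)^{−γ} dy ≤ c_γ (1+‖x‖−√n)^{2−γ}. -/
theorem stmt14 (γ : ℝ) (hγ : 2 < γ) :
    ∃ c : ℝ, 0 < c ∧ ∀ n : ℕ, 1 ≤ n → ∀ x : EuclideanSpace ℝ (Fin 2),
      Real.sqrt n < ‖x‖ →
      (∫ y in Metric.ball (0 : EuclideanSpace ℝ (Fin 2)) (Real.sqrt n),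
          (1 + ∑ i, |y i - x i|) ^ (-γ))
        ≤ c * (1 + ‖x‖ - Real.sqrt n) ^ (2 - γ) := by
  have hdim : Module.finrank ℝ (EuclideanSpace ℝ (Fin 2)) = 2 := finrank_euclideanSpace_fin
  have hV : 0 < volume.real (ball (0 : EuclideanSpace ℝ (Fin 2)) 1) :=
    ENNReal.toReal_pos (measure_ball_pos _ _ one_pos).ne' measure_ball_lt_top.ne
  refine ⟨2 * volume.real (ball (0 : EuclideanSpace ℝ (Fin 2)) 1) / (γ - 2),
    div_pos (by positivity) (by linarith), fun n _ x hx ↦ ?_⟩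
  have hball := setIntegral_ball_one_add_norm_sub_rpow_neg_le volume x
    (by rwa [hdim, Nat.cast_ofNat]) hx.le
  rw [hdim, Nat.cast_ofNat] at hball
  have hcont : Continuous fun y : EuclideanSpace ℝ (Fin 2) ↦ (1 + ‖y - x‖) ^ (-γ) :=
    (by fun_prop : Continuous fun y : EuclideanSpace ℝ (Fin 2) ↦ 1 + ‖y - x‖).rpow_const
      fun y ↦ Or.inl (by positivity)
  calc ∫ y in ball 0 (Real.sqrt n), (1 + ∑ i, |y i - x i|) ^ (-γ)
      ≤ ∫ y in ball 0 (Real.sqrt n), (1 + ‖y - x‖) ^ (-γ) :=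
        integral_mono_of_nonneg (ae_of_all _ fun y ↦ by positivity)
          ((hcont.continuousOn.integrableOn_compact (isCompact_closedBall _ _)).mono_set
            ball_subset_closedBall)
          (ae_of_all _ fun y ↦ Real.rpow_le_rpow_of_nonpos (by positivity)
            (by simpa using EuclideanSpace.norm_le_sum_abs (y - x)) (by linarith))
    _ ≤ _ := hball
    _ = _ := by ring_nf
end

section
/- Let f : ℝ → ℝ be C¹ with {f ≥ u} compact for each u, and h a C¹ function with compact support. Then ∫_ℝ h(u) N_u⁺(f) du = ∫_ℝ h(f(x)) f'(x)⁺ dx and ∫_ℝ h(u) N_u⁻(f) du = ∫_ℝ h(f(x)) f'(x)⁻ dx, where N_u⁺(f), N_u⁻(f) are respectively the numbers of up-crossings and down-crossings of f at level u, defined for almost all u. -/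
/-!
The open set `{f' > 0}` is a countable disjoint union of intervals, on each of which `f` is
strictly increasing. Changing variables on each interval `I` turns `∫_I h(f x) f'(x) dx` into
`∫_{f(I)} h`, and summing over the intervals gives `∫ h(u) · #{I | u ∈ f(I)} du`; since each
interval contains at most one solution of `f x = u`, that count is `N_u⁺(f)`. Down-crossings of
`f` are up-crossings of `x ↦ f (-x)`.
-/

open Set MeasureTheory Function
open scoped ENNReal

section ConnectedComponents

variable {α : Type*} [TopologicalSpace α]

theorem pairwiseDisjoint_image_connectedComponentIn (U : Set α) :
    (connectedComponentIn U '' U).PairwiseDisjoint id := by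
  rintro _ ⟨x, -, rfl⟩ _ ⟨y, -, rfl⟩ hxy
  refine Set.disjoint_left.2 fun z hzx hzy => hxy ?_
  exact (connectedComponentIn_eq hzx).trans (connectedComponentIn_eq hzy).symm

theorem sUnion_image_connectedComponentIn (U : Set α) : ⋃₀ (connectedComponentIn U '' U) = U :=
  (sUnion_subset (by rintro _ ⟨x, -, rfl⟩; exact connectedComponentIn_subset U x)).antisymm
    fun x hx => ⟨_, mem_image_of_mem _ hx, mem_connectedComponentIn hx⟩

theorem IsOpen.countable_image_connectedComponentIn [LocallyConnectedSpace α]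
    [TopologicalSpace.SeparableSpace α] {U : Set α} (hU : IsOpen U) :
    (connectedComponentIn U '' U).Countable :=
  (pairwiseDisjoint_image_connectedComponentIn U).countable_of_isOpen
    (by rintro _ ⟨x, -, rfl⟩; exact hU.connectedComponentIn)
    (by rintro _ ⟨x, hx, rfl⟩; exact ⟨x, mem_connectedComponentIn hx⟩)

end ConnectedComponents

theorem ncard_setOf_mem_image_eq_ncard_preimage_inter_iUnion {α β ι : Type*} {s : ι → Set α}
    {f : α → β} (hd : Pairwise (Disjoint on s)) (hf : ∀ i, InjOn f (s i)) (u : β) :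
    {i | u ∈ f '' s i}.ncard = (f ⁻¹' {u} ∩ ⋃ i, s i).ncard := by
  symm
  refine ncard_congr (fun x hx => (mem_iUnion.1 hx.2).choose) ?_ ?_ ?_
  · intro x hx
    exact ⟨x, (mem_iUnion.1 hx.2).choose_spec, hx.1⟩
  · intro x y hx hy hxy
    have hy' := (mem_iUnion.1 hy.2).choose_spec
    rw [← hxy] at hy'
    exact hf _ (mem_iUnion.1 hx.2).choose_spec hy' (hx.1.trans hy.1.symm)
  · rintro i ⟨x, hxi, hfx⟩
    have hx : x ∈ f ⁻¹' {u} ∩ ⋃ i, s i := ⟨hfx, mem_iUnion.2 ⟨i, hxi⟩⟩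
    exact ⟨x, hx, hd.eq (Set.not_disjoint_iff.2 ⟨x, (mem_iUnion.1 hx.2).choose_spec, hxi⟩)⟩

/-- Valid for every `u`: when the fibre is infinite, `ncard` is `0` and so is the `tsum` of the
non-summable family of copies of `g u`. -/
theorem tsum_indicator_image_eq_ncard_smul {α β ι G : Type*} [AddCommGroup G]
    [TopologicalSpace G] [IsTopologicalAddGroup G] [T2Space G] {s : ι → Set α} {f : α → β}
    (hd : Pairwise (Disjoint on s)) (hf : ∀ i, InjOn f (s i)) (g : β → G) (u : β) :
    ∑' i, (f '' s i).indicator g u = (f ⁻¹' {u} ∩ ⋃ i, s i).ncard • g u := by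
  have hind : ∀ i, (f '' s i).indicator g u = {i | u ∈ f '' s i}.indicator (fun _ => g u) i :=
    fun _ => rfl
  rw [tsum_congr hind, ← tsum_subtype, tsum_const, Nat.card_coe_set_eq,
    ncard_setOf_mem_image_eq_ncard_preimage_inter_iUnion hd hf]

theorem integral_tsum_indicator_image_eq_setIntegral {ι F : Type*} [Countable ι]
    [NormedAddCommGroup F] [NormedSpace ℝ F] {s : ι → Set ℝ} {f f' : ℝ → ℝ} {g : ℝ → F}
    (hs : ∀ i, MeasurableSet (s i)) (hd : Pairwise (Disjoint on s))
    (hf' : ∀ i, ∀ x ∈ s i, HasDerivWithinAt f (f' x) (s i) x) (hf : ∀ i, InjOn f (s i))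
    (hg : IntegrableOn (fun x => |f' x| • g (f x)) (⋃ i, s i)) :
    ∫ u, ∑' i, (f '' s i).indicator g u = ∫ x in ⋃ i, s i, |f' x| • g (f x) := by
  have himage : ∀ i, MeasurableSet (f '' s i) := fun i =>
    measurable_image_of_fderivWithin (hs i) (fun x hx => (hf' i x hx).hasFDerivWithinAt) (hf i)
  have hgi : ∀ i, IntegrableOn g (f '' s i) := fun i =>
    (integrableOn_image_iff_integrableOn_abs_deriv_smul (hs i) (hf' i) (hf i) g).2
      (hg.mono_set (subset_iUnion s i))
  have hfin : ∑' i, ∫⁻ u, ‖(f '' s i).indicator g u‖ₑ ≠ ∞ := by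
    have hpiece : ∀ i,
        ∫⁻ u, ‖(f '' s i).indicator g u‖ₑ = ∫⁻ x in s i, ‖|f' x| • g (f x)‖ₑ := by
      intro i
      simp_rw [enorm_indicator_eq_indicator_enorm, lintegral_indicator (himage i),
        lintegral_image_eq_lintegral_abs_deriv_mul (hs i) (hf' i) (hf i), enorm_smul,
        Real.enorm_eq_ofReal_abs, abs_abs]
    rw [tsum_congr hpiece, ← lintegral_iUnion hs hd]
    exact hg.2.ne
  calc ∫ u, ∑' i, (f '' s i).indicator g u
      = ∑' i, ∫ u, (f '' s i).indicator g u :=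
        integral_tsum (fun i => ((hgi i).integrable_indicator (himage i)).aestronglyMeasurable) hfin
    _ = ∑' i, ∫ x in s i, |f' x| • g (f x) := by
        simp_rw [integral_indicator (himage _),
          integral_image_eq_integral_abs_deriv_smul (hs _) (hf' _) (hf _)]
    _ = ∫ x in ⋃ i, s i, |f' x| • g (f x) := (integral_iUnion hs hd hg).symm

theorem HasCompactSupport.comp_of_isCompact_setOf_le {X β : Type*} [TopologicalSpace X]
    [R1Space X] [Zero β] {h : ℝ → β} {f : X → ℝ} (hh : HasCompactSupport h)
    (hf : ∀ u, IsCompact {x | u ≤ f x}) : HasCompactSupport (h ∘ f) := by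
  obtain ⟨a, ha⟩ := hh.isCompact.bddBelow
  refine HasCompactSupport.intro (hf a) fun x hx => ?_
  by_contra hne
  exact hx (ha (subset_tsupport h hne))

theorem strictMonoOn_connectedComponentIn_setOf_deriv_pos {f : ℝ → ℝ} (hf : Continuous f)
    (x : ℝ) : StrictMonoOn f (connectedComponentIn {y | 0 < deriv f y} x) :=
  strictMonoOn_of_deriv_pos (Real.convex_iff_isPreconnected.2 isPreconnected_connectedComponentIn)
    hf.continuousOn fun y hy =>
      (connectedComponentIn_subset _ x (interior_subset hy) : y ∈ {y | 0 < deriv f y})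

theorem integral_mul_ncard_upcrossings {f h : ℝ → ℝ} (hf : ContDiff ℝ 1 f)
    (hcpt : ∀ u : ℝ, IsCompact {x | u ≤ f x}) (hh : Continuous h) (hhsupp : HasCompactSupport h) :
    ∫ u, h u * ({x | f x = u ∧ 0 < deriv f x}.ncard : ℝ)
      = ∫ x, h (f x) * max (deriv f x) 0 := by
  set U := {x | 0 < deriv f x}
  have hU : IsOpen U := isOpen_lt continuous_const (hf.continuous_deriv le_rfl)
  set C := connectedComponentIn U '' U
  have : Countable C := hU.countable_image_connectedComponentIn.to_subtype
  have hd : Pairwise (Disjoint on fun s : C => (s : Set ℝ)) :=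
    (pairwiseDisjoint_image_connectedComponentIn U).subtype _
  have hUnion : ⋃ s : C, (s : Set ℝ) = U := by
    rw [← sUnion_eq_iUnion, sUnion_image_connectedComponentIn]
  have hopen : ∀ s : C, IsOpen (s : Set ℝ) := by
    rintro ⟨_, x, -, rfl⟩
    exact hU.connectedComponentIn
  have hinj : ∀ s : C, InjOn f s := by
    rintro ⟨_, x, -, rfl⟩
    exact (strictMonoOn_connectedComponentIn_setOf_deriv_pos hf.continuous x).injOn
  have hcount : ∀ u, h u * ({x | f x = u ∧ 0 < deriv f x}.ncard : ℝ)
      = ∑' s : C, (f '' s).indicator h u := by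
    intro u
    rw [tsum_indicator_image_eq_ncard_smul hd hinj, hUnion, nsmul_eq_mul, mul_comm]
    rfl
  have hint : IntegrableOn (fun x => |deriv f x| • h (f x)) (⋃ s : C, (s : Set ℝ)) := by
    refine Integrable.integrableOn (Continuous.integrable_of_hasCompactSupport ?_ ?_)
    · exact (hf.continuous_deriv le_rfl).abs.smul (hh.comp hf.continuous)
    · exact (hhsupp.comp_of_isCompact_setOf_le hcpt).mul_left
  calc ∫ u, h u * ({x | f x = u ∧ 0 < deriv f x}.ncard : ℝ)
      = ∫ u, ∑' s : C, (f '' s).indicator h u := integral_congr_ae (.of_forall hcount)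
    _ = ∫ x in U, |deriv f x| • h (f x) := by
        rw [integral_tsum_indicator_image_eq_setIntegral (fun s => (hopen s).measurableSet) hd
          (fun _ x _ => ((hf.differentiable one_ne_zero) x).hasDerivAt.hasDerivWithinAt) hinj hint,
          hUnion]
    _ = ∫ x, h (f x) * max (deriv f x) 0 := by
        rw [← integral_indicator hU.measurableSet]
        congr 1 with x
        by_cases hx : 0 < deriv f x
        · rw [indicator_of_mem (show x ∈ U from hx), smul_eq_mul, abs_of_pos hx,
            max_eq_left hx.le, mul_comm]
        · rw [indicator_of_notMem (show x ∉ U from hx), max_eq_right (not_lt.1 hx), mul_zero]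

theorem ncard_downcrossings_eq_ncard_upcrossings_comp_neg (f : ℝ → ℝ) (u : ℝ) :
    {x | f x = u ∧ deriv f x < 0}.ncard
      = {x | f (-x) = u ∧ 0 < deriv (fun x => f (-x)) x}.ncard := by
  rw [← ncard_image_of_injective _ neg_injective]
  congr 1
  ext x
  simp [deriv_comp_neg]

/-- one-dimensional Kac–Rice / co-area formula: for f C¹ with compact
excursion sets and h C¹ with compact support,
∫ h(u) N_u⁺(f) du = ∫ h(f(x)) f'(x)⁺ dx and ∫ h(u) N_u⁻(f) du = ∫ h(f(x)) f'(x)⁻ dx. -/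
theorem stmt18 (f h : ℝ → ℝ) (hf : ContDiff ℝ 1 f)
    (hcpt : ∀ u : ℝ, IsCompact {x | u ≤ f x})
    (hh : ContDiff ℝ 1 h) (hhsupp : HasCompactSupport h) :
    (∫ u : ℝ, h u * ({x | f x = u ∧ 0 < deriv f x}.ncard : ℝ))
      = (∫ x : ℝ, h (f x) * max (deriv f x) 0) ∧
    (∫ u : ℝ, h u * ({x | f x = u ∧ deriv f x < 0}.ncard : ℝ))
      = ∫ x : ℝ, h (f x) * max (-deriv f x) 0 := by
  refine ⟨integral_mul_ncard_upcrossings hf hcpt hh.continuous hhsupp, ?_⟩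
  have hcpt_neg : ∀ u : ℝ, IsCompact {x | u ≤ f (-x)} := fun u =>
    (Homeomorph.neg ℝ).isCompact_preimage.2 (hcpt u)
  calc ∫ u, h u * ({x | f x = u ∧ deriv f x < 0}.ncard : ℝ)
      = ∫ u, h u * ({x | f (-x) = u ∧ 0 < deriv (fun x => f (-x)) x}.ncard : ℝ) := by
        simp_rw [ncard_downcrossings_eq_ncard_upcrossings_comp_neg]
    _ = ∫ x, h (f (-x)) * max (deriv (fun x => f (-x)) x) 0 :=
        integral_mul_ncard_upcrossings (hf.comp contDiff_neg) hcpt_neg hh.continuous hhsupp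
    _ = ∫ x, h (f x) * max (-deriv f x) 0 := by
        simp_rw [deriv_comp_neg]
        exact integral_neg_eq_self (fun x => h (f x) * max (-deriv f x) 0) volume
end

section
/- Let f be a stationary, isotropic C¹ random field on ℝ² such that conditionally on f(0), the law of ∇f(0) is invariant under rotations, and let h be bounded measurable. Then for i = 1, 2, E[h(f(0)) 1_{∇f(0) ∈ Q_i} (∂_i f(0))²] = ((π−2)/(16π)) E[h(f(0)) ‖∇f(0)‖²]. -/
/-!
Rotation invariance of the joint law of `(f(0), ∇f(0))` lets one replace `∇f(0)` by its rotation
by any angle `θ` inside the expectation; averaging over `θ ∈ [0, 2π]` and exchanging the order of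
integration (Fubini) turns the left-hand side into `E[h(f(0)) · A(∇f(0))] / 2π`, where `A(v)` is the
integral of the weight over the circle of radius `‖v‖`. The weights are homogeneous of degree 2,
so `A(v) = ‖v‖²` times the integral over the unit circle, which for `Q₁` is
`∫_{5π/4}^{3π/2} cos² = (π - 2)/8`; the `Q₂` case is its reflection in the diagonal.
-/

open MeasureTheory Real

noncomputable def planeRot (θ : ℝ) (v : ℝ × ℝ) : ℝ × ℝ :=
  (cos θ * v.1 - sin θ * v.2, sin θ * v.1 + cos θ * v.2)

@[fun_prop]
lemma Measurable.planeRot {β : Type*} [MeasurableSpace β] {θ : β → ℝ} {v : β → ℝ × ℝ}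
    (hθ : Measurable θ) (hv : Measurable v) : Measurable fun x => planeRot (θ x) (v x) := by
  unfold _root_.planeRot; fun_prop

lemma planeRot_sq_add_sq (θ : ℝ) (v : ℝ × ℝ) :
    (planeRot θ v).1 ^ 2 + (planeRot θ v).2 ^ 2 = v.1 ^ 2 + v.2 ^ 2 := by
  simp only [planeRot]
  linear_combination (v.1 ^ 2 + v.2 ^ 2) * sin_sq_add_cos_sq θ

lemma planeRot_polar (θ r α : ℝ) :
    planeRot θ (r * cos α, r * sin α) = r • (cos (θ + α), sin (θ + α)) := by
  simp only [planeRot, cos_add, sin_add, Prod.smul_mk, smul_eq_mul, Prod.mk.injEq]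
  constructor <;> ring

lemma periodic_comp_cos_sin (g : ℝ × ℝ → ℝ) :
    Function.Periodic (fun ψ => g (cos ψ, sin ψ)) (2 * π) := fun ψ => by
  simp only [cos_add_two_pi, sin_add_two_pi]

lemma exists_polar_repr (v : ℝ × ℝ) : ∃ r α : ℝ, 0 ≤ r ∧ v = (r * cos α, r * sin α) :=
  ⟨‖(⟨v.1, v.2⟩ : ℂ)‖, Complex.arg ⟨v.1, v.2⟩, norm_nonneg _, by
    rw [Complex.norm_mul_cos_arg, Complex.norm_mul_sin_arg]⟩

lemma integral_comp_planeRot_of_homogeneous {g : ℝ × ℝ → ℝ}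
    (hg : ∀ r : ℝ, 0 ≤ r → ∀ u, g (r • u) = r ^ 2 * g u) (v : ℝ × ℝ) :
    ∫ θ in 0..2 * π, g (planeRot θ v)
      = (v.1 ^ 2 + v.2 ^ 2) * ∫ ψ in 0..2 * π, g (cos ψ, sin ψ) := by
  obtain ⟨r, α, hr, rfl⟩ := exists_polar_repr v
  have hper := periodic_comp_cos_sin g
  simp_rw [planeRot_polar, hg r hr]
  rw [intervalIntegral.integral_const_mul, intervalIntegral.integral_comp_add_right
    (fun ψ => g (cos ψ, sin ψ)), zero_add, add_comm (2 * π), hper.intervalIntegral_add_eq α 0,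
    zero_add]
  linear_combination (-(r ^ 2 * ∫ ψ in 0..2 * π, g (cos ψ, sin ψ))) * sin_sq_add_cos_sq α

/-- `1_{Q₁}(v) v₁²`; the weight of `Q₂` is `sectorWeight ∘ Prod.swap`. -/
noncomputable def sectorWeight (v : ℝ × ℝ) : ℝ :=
  (if v.2 < v.1 ∧ v.1 < 0 then 1 else 0) * v.1 ^ 2

lemma measurable_sectorWeight : Measurable sectorWeight := by
  unfold sectorWeight
  refine Measurable.mul (Measurable.ite ?_ measurable_const measurable_const)
    (measurable_fst.pow_const 2)
  exact (measurableSet_lt measurable_snd measurable_fst).inter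
    (measurableSet_lt measurable_fst measurable_const)

lemma abs_sectorWeight_le (v : ℝ × ℝ) : |sectorWeight v| ≤ v.1 ^ 2 + v.2 ^ 2 := by
  unfold sectorWeight
  split_ifs
  · rw [one_mul, abs_of_nonneg (sq_nonneg _)]
    exact le_add_of_nonneg_right (sq_nonneg _)
  · rw [zero_mul, abs_zero]
    positivity

lemma sectorWeight_smul {r : ℝ} (hr : 0 ≤ r) (u : ℝ × ℝ) :
    sectorWeight (r • u) = r ^ 2 * sectorWeight u := by
  rcases hr.eq_or_lt with rfl | hr
  · simp [sectorWeight]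
  have hcone : r * u.2 < r * u.1 ∧ r * u.1 < 0 ↔ u.2 < u.1 ∧ u.1 < 0 :=
    and_congr (mul_lt_mul_iff_right₀ hr) (smul_neg_iff_of_pos_left hr)
  simp only [sectorWeight, Prod.smul_fst, Prod.smul_snd, smul_eq_mul, hcone]
  split_ifs <;> ring

lemma sin_sub_cos_eq_sqrt_two_mul_sin (ψ : ℝ) : sin ψ - cos ψ = √2 * sin (ψ - π / 4) := by
  rw [sin_sub, cos_pi_div_four, sin_pi_div_four]
  linear_combination (-(sin ψ - cos ψ) / 2) * Real.sq_sqrt (show (0:ℝ) ≤ 2 by norm_num)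

lemma intervalIntegrable_sectorWeight_circle (a b : ℝ) :
    IntervalIntegrable (fun ψ => sectorWeight (cos ψ, sin ψ)) volume a b := by
  refine (intervalIntegrable_const (c := (1 : ℝ))).mono_fun'
    (measurable_sectorWeight.comp (by fun_prop)).aestronglyMeasurable (ae_of_all _ fun ψ => ?_)
  simpa [cos_sq_add_sin_sq] using abs_sectorWeight_le (cos ψ, sin ψ)

lemma integral_sectorWeight_circle :
    ∫ ψ in 0..2 * π, sectorWeight (cos ψ, sin ψ) = (π - 2) / 8 := by
  have hπ := pi_pos
  have hper := periodic_comp_cos_sin sectorWeight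
  -- over the period `[5π/4, 13π/4]`, the weight vanishes outside `(5π/4, 3π/2)`
  have hsector : ∫ ψ in 5 * π / 4..3 * π / 2, sectorWeight (cos ψ, sin ψ) = (π - 2) / 8 := by
    rw [intervalIntegral.integral_congr_Ioo_of_le (by linarith) (g := fun ψ => cos ψ ^ 2),
      integral_cos_sq, show 3 * π / 2 = π / 2 + π by ring, show 5 * π / 4 = π / 4 + π by ring]
    · simp only [cos_add_pi, sin_add_pi, cos_pi_div_two, cos_pi_div_four, sin_pi_div_four]
      linear_combination (-1 / 8 : ℝ) * Real.sq_sqrt (show (0:ℝ) ≤ 2 by norm_num)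
    · intro ψ ⟨hψ₁, hψ₂⟩
      have hc : cos ψ < 0 := cos_neg_of_pi_div_two_lt_of_lt (by linarith) (by linarith)
      have hsc : sin ψ - cos ψ < 0 := by
        rw [sin_sub_cos_eq_sqrt_two_mul_sin, ← sin_sub_two_pi]
        exact mul_neg_of_pos_of_neg (by positivity)
          (sin_neg_of_neg_of_neg_pi_lt (by linarith) (by linarith))
      simp [sectorWeight, hc, sub_neg.1 hsc]
  have hrest : ∫ ψ in 3 * π / 2..5 * π / 4 + 2 * π, sectorWeight (cos ψ, sin ψ) = 0 := by
    rw [intervalIntegral.integral_congr_Ioo_of_le (by linarith) (g := fun _ => 0),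
      intervalIntegral.integral_zero]
    intro ψ ⟨hψ₁, hψ₂⟩
    suffices ¬(sin ψ < cos ψ ∧ cos ψ < 0) by simp [sectorWeight, this]
    rintro ⟨hsc, hc⟩
    rcases le_or_gt ψ (5 * π / 2) with hψ | hψ
    · have : 0 ≤ cos ψ := by
        rw [← cos_sub_two_pi]
        exact cos_nonneg_of_mem_Icc ⟨by linarith, by linarith⟩
      linarith
    · have : 0 ≤ sin ψ - cos ψ := by
        rw [sin_sub_cos_eq_sqrt_two_mul_sin, ← sin_sub_two_pi]
        exact mul_nonneg (by positivity)
          (sin_nonneg_of_nonneg_of_le_pi (by linarith) (by linarith))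
      linarith
  rw [← zero_add (2 * π), hper.intervalIntegral_add_eq 0 (5 * π / 4),
    ← intervalIntegral.integral_add_adjacent_intervals (b := 3 * π / 2)
      (intervalIntegrable_sectorWeight_circle _ _) (intervalIntegrable_sectorWeight_circle _ _),
    hsector, hrest, add_zero]

lemma integral_sectorWeight_swap_circle :
    ∫ ψ in 0..2 * π, sectorWeight (sin ψ, cos ψ) = (π - 2) / 8 := by
  have hper := periodic_comp_cos_sin sectorWeight
  have hreflect (ψ : ℝ) :
      sectorWeight (sin ψ, cos ψ) = sectorWeight (cos (π / 2 - ψ), sin (π / 2 - ψ)) := by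
    rw [cos_pi_div_two_sub, sin_pi_div_two_sub]
  simp_rw [hreflect]
  rw [intervalIntegral.integral_comp_sub_left (fun ψ => sectorWeight (cos ψ, sin ψ)),
    show π / 2 - 0 = π / 2 - 2 * π + 2 * π by ring,
    hper.intervalIntegral_add_eq _ 0, zero_add, integral_sectorWeight_circle]

section

variable {Ω α : Type*} [MeasurableSpace Ω] {P : Measure Ω} [MeasurableSpace α]
  {X : Ω → α} {V : Ω → ℝ × ℝ} {w : α → ℝ} {g : ℝ × ℝ → ℝ}

lemma integral_mul_comp_planeRot_eq (hX : Measurable X) (hV : Measurable V)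
    (hrot : ∀ θ, P.map (fun ω => (X ω, planeRot θ (V ω))) = P.map (fun ω => (X ω, V ω)))
    (hw : Measurable w) (hg : Measurable g) (θ : ℝ) :
    ∫ ω, w (X ω) * g (planeRot θ (V ω)) ∂P = ∫ ω, w (X ω) * g (V ω) ∂P := by
  have hΦ : Measurable fun p : α × (ℝ × ℝ) => w p.1 * g p.2 := by fun_prop
  have h1 := integral_map (μ := P) (φ := fun ω => (X ω, planeRot θ (V ω))) (by fun_prop)
    hΦ.aestronglyMeasurable
  rw [hrot θ, integral_map (by fun_prop) hΦ.aestronglyMeasurable] at h1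
  exact h1.symm

lemma two_pi_mul_integral_mul_comp_eq [SFinite P] (hX : Measurable X) (hV : Measurable V)
    (hrot : ∀ θ, P.map (fun ω => (X ω, planeRot θ (V ω))) = P.map (fun ω => (X ω, V ω)))
    (hw : Measurable w) (hg : Measurable g) {C : ℝ}
    (hgC : ∀ v, |g v| ≤ C * (v.1 ^ 2 + v.2 ^ 2))
    (hint : Integrable (fun ω => |w (X ω)| * ((V ω).1 ^ 2 + (V ω).2 ^ 2)) P) :
    2 * π * ∫ ω, w (X ω) * g (V ω) ∂P
      = ∫ ω, w (X ω) * (∫ θ in 0..2 * π, g (planeRot θ (V ω))) ∂P := by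
  have hπ : 0 ≤ 2 * π := by positivity
  set ν : Measure ℝ := volume.restrict (Set.Ioc 0 (2 * π))
  have hK : Integrable (Function.uncurry fun θ ω => w (X ω) * g (planeRot θ (V ω)))
      (ν.prod P) := by
    refine ((hint.const_mul C).comp_snd ν).mono' ?_ (ae_of_all _ fun q => ?_)
    · exact Measurable.aestronglyMeasurable (by fun_prop)
    · simp only [Function.uncurry, norm_mul, norm_eq_abs]
      calc |w (X q.2)| * |g (planeRot q.1 (V q.2))|
          ≤ |w (X q.2)| * (C * ((V q.2).1 ^ 2 + (V q.2).2 ^ 2)) := by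
            gcongr
            simpa only [planeRot_sq_add_sq] using hgC (planeRot q.1 (V q.2))
        _ = C * (|w (X q.2)| * ((V q.2).1 ^ 2 + (V q.2).2 ^ 2)) := by ring
  have hν : ν.real Set.univ = 2 * π := by
    rw [measureReal_restrict_apply_univ, Real.volume_real_Ioc_of_le hπ, sub_zero]
  calc 2 * π * ∫ ω, w (X ω) * g (V ω) ∂P
      = ∫ θ, ∫ ω, w (X ω) * g (planeRot θ (V ω)) ∂P ∂ν := by
        simp only [integral_mul_comp_planeRot_eq hX hV hrot hw hg, integral_const, smul_eq_mul, hν]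
    _ = ∫ ω, ∫ θ, w (X ω) * g (planeRot θ (V ω)) ∂ν ∂P := integral_integral_swap hK
    _ = ∫ ω, w (X ω) * (∫ θ in 0..2 * π, g (planeRot θ (V ω))) ∂P := by
        simp_rw [intervalIntegral.integral_of_le hπ, integral_const_mul]
        rfl

lemma integral_mul_comp_of_homogeneous [SFinite P] (hX : Measurable X) (hV : Measurable V)
    (hrot : ∀ θ, P.map (fun ω => (X ω, planeRot θ (V ω))) = P.map (fun ω => (X ω, V ω)))
    (hw : Measurable w) (hg : Measurable g)
    (hhom : ∀ r : ℝ, 0 ≤ r → ∀ u, g (r • u) = r ^ 2 * g u) {C : ℝ}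
    (hgC : ∀ v, |g v| ≤ C * (v.1 ^ 2 + v.2 ^ 2))
    (hint : Integrable (fun ω => |w (X ω)| * ((V ω).1 ^ 2 + (V ω).2 ^ 2)) P) :
    ∫ ω, w (X ω) * g (V ω) ∂P
      = (∫ ψ in 0..2 * π, g (cos ψ, sin ψ)) / (2 * π)
        * ∫ ω, w (X ω) * ((V ω).1 ^ 2 + (V ω).2 ^ 2) ∂P := by
  have h := two_pi_mul_integral_mul_comp_eq hX hV hrot hw hg hgC hint
  simp_rw [integral_comp_planeRot_of_homogeneous hhom, ← mul_assoc, integral_mul_const] at h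
  field_simp
  linear_combination h

end

theorem stmt19_general {Ω : Type*} [MeasureSpace Ω]
    [IsProbabilityMeasure (volume : Measure Ω)]
    (F : Ω → ℝ) (G : Ω → ℝ × ℝ)
    (hmeasF : Measurable F) (hmeasG : Measurable G)
    (hrot : ∀ θ : ℝ,
      Measure.map (fun ω => (F ω, (Real.cos θ * (G ω).1 - Real.sin θ * (G ω).2,
                                   Real.sin θ * (G ω).1 + Real.cos θ * (G ω).2)))
          (volume : Measure Ω)
        = Measure.map (fun ω => (F ω, G ω)) (volume : Measure Ω))
    (h : ℝ → ℝ) (hmeas : Measurable h)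
    (hint : Integrable (fun ω => |h (F ω)| * ((G ω).1 ^ 2 + (G ω).2 ^ 2))) :
    (∫ ω, h (F ω) * (if (G ω).2 < (G ω).1 ∧ (G ω).1 < 0 then (1 : ℝ) else 0)
        * (G ω).1 ^ 2)
      = (π - 2) / (16 * π) * ∫ ω, h (F ω) * ((G ω).1 ^ 2 + (G ω).2 ^ 2) ∧
    (∫ ω, h (F ω) * (if (G ω).1 < (G ω).2 ∧ (G ω).2 < 0 then (1 : ℝ) else 0)
        * (G ω).2 ^ 2)
      = (π - 2) / (16 * π) * ∫ ω, h (F ω) * ((G ω).1 ^ 2 + (G ω).2 ^ 2) := by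
  have hsector (g : ℝ × ℝ → ℝ) (hg : Measurable g)
      (hhom : ∀ r : ℝ, 0 ≤ r → ∀ u, g (r • u) = r ^ 2 * g u)
      (hgC : ∀ v, |g v| ≤ v.1 ^ 2 + v.2 ^ 2)
      (hcircle : ∫ ψ in 0..2 * π, g (cos ψ, sin ψ) = (π - 2) / 8) :
      ∫ ω, h (F ω) * g (G ω)
        = (π - 2) / (16 * π) * ∫ ω, h (F ω) * ((G ω).1 ^ 2 + (G ω).2 ^ 2) := by
    rw [integral_mul_comp_of_homogeneous hmeasF hmeasG hrot hmeas hg hhom (C := 1)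
      (by simpa only [one_mul] using hgC) hint, hcircle]
    field_simp
    ring
  constructor
  · simpa only [sectorWeight, mul_assoc] using
      hsector sectorWeight measurable_sectorWeight (fun _ hr => sectorWeight_smul hr)
        abs_sectorWeight_le integral_sectorWeight_circle
  · simpa only [sectorWeight, Function.comp_apply, Prod.fst_swap, Prod.snd_swap, mul_assoc] using
      hsector (sectorWeight ∘ Prod.swap) (measurable_sectorWeight.comp measurable_swap)
        (fun r hr u => by simp only [Function.comp_apply, Prod.smul_swap, sectorWeight_smul hr])
        (fun v => (abs_sectorWeight_le v.swap).trans_eq (add_comm _ _))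
        integral_sectorWeight_swap_circle

/-- if f is a C¹ random field on ℝ² such that, jointly with f(0), the
gradient ∇f(0) has a rotation-invariant conditional law (formalized: for every angle θ
the joint law of (f(0), r_θ ∇f(0)) equals that of (f(0), ∇f(0))), then for any bounded
measurable h and i = 1,2:
E[h(f(0)) 1_{∇f(0) ∈ Q_i} (∂_i f(0))²] = ((π−2)/(16π)) E[h(f(0)) ‖∇f(0)‖²]. -/
theorem stmt19 {Ω : Type*} [MeasureSpace Ω]
    [IsProbabilityMeasure (volume : Measure Ω)]
    (f : Ω → ℝ × ℝ → ℝ) (hdiff : ∀ ω, Differentiable ℝ (f ω))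
    (F : Ω → ℝ) (G : Ω → ℝ × ℝ)
    (hF : ∀ ω, F ω = f ω 0)
    (hG : ∀ ω, G ω = (fderiv ℝ (f ω) 0 (1, 0), fderiv ℝ (f ω) 0 (0, 1)))
    (hmeasF : Measurable F) (hmeasG : Measurable G)
    (hrot : ∀ θ : ℝ,
      Measure.map (fun ω => (F ω, (Real.cos θ * (G ω).1 - Real.sin θ * (G ω).2,
                                   Real.sin θ * (G ω).1 + Real.cos θ * (G ω).2)))
          (volume : Measure Ω)
        = Measure.map (fun ω => (F ω, G ω)) (volume : Measure Ω))
    (h : ℝ → ℝ) (hmeas : Measurable h) (hbd : ∃ c : ℝ, ∀ t, |h t| ≤ c)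
    (hint : Integrable (fun ω => |h (F ω)| * ((G ω).1 ^ 2 + (G ω).2 ^ 2))) :
    (∫ ω, h (F ω) * (if (G ω).2 < (G ω).1 ∧ (G ω).1 < 0 then (1 : ℝ) else 0)
        * (G ω).1 ^ 2)
      = (π - 2) / (16 * π) * ∫ ω, h (F ω) * ((G ω).1 ^ 2 + (G ω).2 ^ 2) ∧
    (∫ ω, h (F ω) * (if (G ω).1 < (G ω).2 ∧ (G ω).2 < 0 then (1 : ℝ) else 0)
        * (G ω).2 ^ 2)
      = (π - 2) / (16 * π) * ∫ ω, h (F ω) * ((G ω).1 ^ 2 + (G ω).2 ^ 2) :=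
  stmt19_general F G hmeasF hmeasG hrot h hmeas hint
end
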